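/- Suppose ν({x : p_{a,1}·f_{a,1}(x) = p_{a,0}·f_{a,0}(x)}) = 0 for a = 0 and a = 1 (the group Bayes classifiers are ν-a.e. unique), the data unfairness vanishes (TPR_0(T*_0) = TPR_1(T*_1) and TNR_0(T*_0) = TNR_1(T*_1)), and some classifier T achieves complete fairness and maximal accuracy in the sense that F_U(T) = 0 and Acc(T) = p_0·Acc_0(T*_0) + p_1·Acc_1(T*_1). Then T agrees with both T*_0 and T*_1 up to ν-null sets; in particular the group-optimal decision boundaries are identical: ν(T*_0 Δ T*_1) = 0. -/

import Mathlib

/-! With the margin `g_a = p_{a,1} f_{a,1} - p_{a,0} f_{a,0}`, the accuracy of `T` is, up to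
constants, `(1/2) Σ_a ∫_T g_a`, while `p_a Acc_a(T*_a)` is the same expression with
`T*_a = {g_a ≥ 0}`, the set maximising `∫_T g_a`. Maximal accuracy therefore forces
`∫_T g_a = ∫_{T*_a} g_a` for both groups. The gap `∫_{T*_a} g_a - ∫_T g_a` equals
`∫_{T Δ T*_a} |g_a|`, so `g_a = 0` a.e. on `T Δ T*_a`, which is then null because
`{g_a = 0}` is. -/

open MeasureTheory

/-- True positive rate of group `a` under classifier `T`: `TPR_a(T) = ∫_T f_{a,1} dν`. -/
noncomputable def tprOf {Ω : Type*} [MeasurableSpace Ω] (ν : Measure Ω)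
    (f : Bool → Bool → Ω → ℝ) (a : Bool) (T : Set Ω) : ℝ :=
  ∫ x in T, f a true x ∂ν

/-- True negative rate of group `a` under classifier `T`: `TNR_a(T) = ∫_{Tᶜ} f_{a,0} dν`. -/
noncomputable def tnrOf {Ω : Type*} [MeasurableSpace Ω] (ν : Measure Ω)
    (f : Bool → Bool → Ω → ℝ) (a : Bool) (T : Set Ω) : ℝ :=
  ∫ x in Tᶜ, f a false x ∂ν

/-- Equalized-odds unfairness. -/
noncomputable def unfairness {Ω : Type*} [MeasurableSpace Ω] (ν : Measure Ω)
    (f : Bool → Bool → Ω → ℝ) (T : Set Ω) : ℝ :=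
  (1/2) * |tprOf ν f true T - tprOf ν f false T|
    + (1/2) * |tnrOf ν f true T - tnrOf ν f false T|

/-- Accuracy of a classifier `T`. -/
noncomputable def accuracy {Ω : Type*} [MeasurableSpace Ω] (ν : Measure Ω)
    (f : Bool → Bool → Ω → ℝ) (p : Bool → Bool → ℝ) (T : Set Ω) : ℝ :=
  (1/2) * (p false true * ∫ x in T, f false true x ∂ν
      + p true true * ∫ x in T, f true true x ∂ν)
  + (1/2) * (p false false * ∫ x in Tᶜ, f false false x ∂ν
      + p true false * ∫ x in Tᶜ, f true false x ∂ν)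

/-- Group accuracy of a classifier `T` with respect to group `a`. -/
noncomputable def groupAccuracy {Ω : Type*} [MeasurableSpace Ω] (ν : Measure Ω)
    (f : Bool → Bool → Ω → ℝ) (p : Bool → Bool → ℝ) (a : Bool) (T : Set Ω) : ℝ :=
  ((1/2) * (p a true * ∫ x in T, f a true x ∂ν)
    + (1/2) * (p a false * ∫ x in Tᶜ, f a false x ∂ν)) / (p a true + p a false)

open Set

section SetIntegral

variable {Ω : Type*} [MeasurableSpace Ω] {ν : Measure Ω} {g : Ω → ℝ} {S T : Set Ω}

theorem setIntegral_sub_setIntegral_eq_sdiff (hgi : Integrable g ν) (hS : MeasurableSet S)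
    (hT : MeasurableSet T) :
    ∫ x in S, g x ∂ν - ∫ x in T, g x ∂ν = ∫ x in S \ T, g x ∂ν - ∫ x in T \ S, g x ∂ν := by
  have hS_split := integral_inter_add_sdiff hT (hgi.integrableOn (s := S))
  have hT_split := integral_inter_add_sdiff hS (hgi.integrableOn (s := T))
  rw [inter_comm] at hT_split
  linarith

theorem setIntegral_setOf_nonneg_sub_setIntegral_eq_setIntegral_abs (hg : Measurable g)
    (hgi : Integrable g ν) (hT : MeasurableSet T) :
    ∫ x in {x | 0 ≤ g x}, g x ∂ν - ∫ x in T, g x ∂ν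
      = ∫ x in symmDiff T {x | 0 ≤ g x}, |g x| ∂ν := by
  set S := {x | 0 ≤ g x}
  have hS : MeasurableSet S := measurableSet_le measurable_const hg
  have h_pos : ∫ x in S \ T, |g x| ∂ν = ∫ x in S \ T, g x ∂ν :=
    setIntegral_congr_fun (hS.diff hT) fun x hx => abs_of_nonneg hx.1
  have h_neg : ∫ x in T \ S, |g x| ∂ν = -∫ x in T \ S, g x ∂ν := by
    rw [← integral_neg]
    exact setIntegral_congr_fun (hT.diff hS) fun x hx => abs_of_neg (not_le.mp hx.2)
  rw [Set.symmDiff_def, setIntegral_union disjoint_sdiff_sdiff (hS.diff hT)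
      hgi.abs.integrableOn hgi.abs.integrableOn, h_pos, h_neg,
    setIntegral_sub_setIntegral_eq_sdiff hgi hS hT]
  ring

theorem measure_symmDiff_setOf_nonneg_eq_zero_of_setIntegral_eq (hg : Measurable g)
    (hgi : Integrable g ν) (hT : MeasurableSet T) (h_null : ν {x | g x = 0} = 0)
    (h_eq : ∫ x in T, g x ∂ν = ∫ x in {x | 0 ≤ g x}, g x ∂ν) :
    ν (symmDiff T {x | 0 ≤ g x}) = 0 := by
  have hD : MeasurableSet (symmDiff T {x | 0 ≤ g x}) :=
    hT.symmDiff (measurableSet_le measurable_const hg)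
  have h_abs : ∫ x in symmDiff T {x | 0 ≤ g x}, |g x| ∂ν = 0 := by
    rw [← setIntegral_setOf_nonneg_sub_setIntegral_eq_setIntegral_abs hg hgi hT, h_eq, sub_self]
  have h_ae : ∀ᵐ x ∂ν, x ∈ symmDiff T {x | 0 ≤ g x} → g x = 0 := by
    rw [← ae_restrict_iff' hD]
    filter_upwards [(setIntegral_eq_zero_iff_of_nonneg_ae
      (ae_of_all _ fun x => abs_nonneg (g x)) hgi.abs.integrableOn).mp h_abs] with x hx
    exact abs_eq_zero.mp hx
  rw [measure_eq_zero_iff_ae_notMem]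
  filter_upwards [h_ae, measure_eq_zero_iff_ae_notMem.mp h_null] with x hx hx0
  exact fun hxD => hx0 (hx hxD)

end SetIntegral

section Fairness

variable {Ω : Type*} [MeasurableSpace Ω] {ν : Measure Ω}

theorem mul_setIntegral_add_mul_setIntegral_compl {u v : Ω → ℝ} (hu : Integrable u ν)
    (hv : Integrable v ν) {T : Set Ω} (hT : MeasurableSet T) (c d : ℝ) :
    c * ∫ x in T, u x ∂ν + d * ∫ x in Tᶜ, v x ∂ν
      = ∫ x in T, (c * u x - d * v x) ∂ν + d * ∫ x, v x ∂ν := by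
  rw [integral_sub (hu.const_mul c).integrableOn (hv.const_mul d).integrableOn,
    integral_const_mul, integral_const_mul, ← integral_add_compl hT hv]
  ring

noncomputable def bayesMargin (f : Bool → Bool → Ω → ℝ) (p : Bool → Bool → ℝ) (a : Bool)
    (x : Ω) : ℝ :=
  p a true * f a true x - p a false * f a false x

variable {f : Bool → Bool → Ω → ℝ} {p : Bool → Bool → ℝ}

theorem integrable_bayesMargin (hf : ∀ a y, Integrable (f a y) ν) (a : Bool) :
    Integrable (bayesMargin f p a) ν :=
  ((hf a true).const_mul _).sub ((hf a false).const_mul _)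

theorem measurable_bayesMargin (hf : ∀ a y, Measurable (f a y)) (a : Bool) :
    Measurable (bayesMargin f p a) :=
  ((hf a true).const_mul _).sub ((hf a false).const_mul _)

theorem accuracy_eq_setIntegral_bayesMargin (hf : ∀ a y, Integrable (f a y) ν) {T : Set Ω}
    (hT : MeasurableSet T) :
    accuracy ν f p T
      = (1/2) * (∫ x in T, bayesMargin f p false x ∂ν
          + p false false * ∫ x, f false false x ∂ν)
        + (1/2) * (∫ x in T, bayesMargin f p true x ∂ν
          + p true false * ∫ x, f true false x ∂ν) := by
  have h₀ := mul_setIntegral_add_mul_setIntegral_compl (hf false true) (hf false false) hT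
    (p false true) (p false false)
  have h₁ := mul_setIntegral_add_mul_setIntegral_compl (hf true true) (hf true false) hT
    (p true true) (p true false)
  simp only [accuracy, bayesMargin]
  linarith

theorem mul_groupAccuracy_eq_setIntegral_bayesMargin (hf : ∀ a y, Integrable (f a y) ν)
    {a : Bool} (hp : p a true + p a false ≠ 0) {S : Set Ω} (hS : MeasurableSet S) :
    (p a true + p a false) * groupAccuracy ν f p a S
      = (1/2) * (∫ x in S, bayesMargin f p a x ∂ν + p a false * ∫ x, f a false x ∂ν) := by
  simp only [groupAccuracy, mul_div_cancel₀ _ hp, bayesMargin,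
    ← mul_setIntegral_add_mul_setIntegral_compl (hf a true) (hf a false) hS]
  ring

end Fairness

theorem complete_fairness_max_accuracy_forces_identical_boundaries
    {Ω : Type*} [MeasurableSpace Ω] (ν : Measure Ω)
    (f : Bool → Bool → Ω → ℝ) (p : Bool → Bool → ℝ)
    (hf_meas : ∀ a y, Measurable (f a y))
    (hf_int : ∀ a y, Integrable (f a y) ν)
    (hp_pos : ∀ a y, 0 < p a y)
    (Tstar : Bool → Set Ω)
    (hTstar : ∀ a, Tstar a = {x | p a false * f a false x ≤ p a true * f a true x})
    (hunique : ∀ a : Bool, ν {x | p a true * f a true x = p a false * f a false x} = 0)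
    (T : Set Ω) (hT : MeasurableSet T)
    (hacc : accuracy ν f p T
      = (p false true + p false false) * groupAccuracy ν f p false (Tstar false)
        + (p true true + p true false) * groupAccuracy ν f p true (Tstar true)) :
    ν (symmDiff T (Tstar false)) = 0 ∧ ν (symmDiff T (Tstar true)) = 0 ∧
      ν (symmDiff (Tstar false) (Tstar true)) = 0 := by
  have hTstar_margin : ∀ a, Tstar a = {x | 0 ≤ bayesMargin f p a x} := fun a => by
    simp only [hTstar a, bayesMargin, sub_nonneg]
  have h_le : ∀ a, ∫ x in T, bayesMargin f p a x ∂ν ≤ ∫ x in Tstar a, bayesMargin f p a x ∂ν :=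
    fun a => hTstar_margin a ▸ setIntegral_le_nonneg hT
      (measurable_bayesMargin hf_meas a).stronglyMeasurable (integrable_bayesMargin hf_int a)
  have hTstar_meas : ∀ a, MeasurableSet (Tstar a) := fun a =>
    hTstar_margin a ▸ measurableSet_le measurable_const (measurable_bayesMargin hf_meas a)
  have hp : ∀ a, p a true + p a false ≠ 0 := fun a =>
    (add_pos (hp_pos a true) (hp_pos a false)).ne'
  rw [accuracy_eq_setIntegral_bayesMargin hf_int hT,
    mul_groupAccuracy_eq_setIntegral_bayesMargin hf_int (hp false) (hTstar_meas false),
    mul_groupAccuracy_eq_setIntegral_bayesMargin hf_int (hp true) (hTstar_meas true)] at hacc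
  have h_agree : ∀ a, ν (symmDiff T (Tstar a)) = 0 := by
    intro a
    have h_eq : ∫ x in T, bayesMargin f p a x ∂ν = ∫ x in Tstar a, bayesMargin f p a x ∂ν := by
      cases a <;> linarith [h_le false, h_le true]
    rw [hTstar_margin a] at h_eq ⊢
    refine measure_symmDiff_setOf_nonneg_eq_zero_of_setIntegral_eq
      (measurable_bayesMargin hf_meas a) (integrable_bayesMargin hf_int a) hT ?_ h_eq
    simpa only [bayesMargin, sub_eq_zero] using hunique a
  refine ⟨h_agree false, h_agree true, measure_mono_null (symmDiff_triangle _ T _) ?_⟩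
  exact measure_union_null (symmDiff_comm T (Tstar false) ▸ h_agree false) (h_agree true)
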